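/- Let A ∈ {0,1} and Y, Z, W, M, D, X be random variables. Suppose q0(Z,X), q1(Z,D,X), q2(Z,M,D,X) are integrable measurable functions satisfying E[A·q0 − 1 | W,X] = 0, E[(1−A)·q1 − A·q0 | W,D,X] = 0, and E[A·q2 − (1−A)·q1 | W,M,D,X] = 0 almost surely. Then for ANY bounded measurable functions h2'(W,M,D,X), h1'(W,D,X), h0'(W,X), one has E[ A·q0·(h1' − h0') + (1−A)·q1·(h2' − h1') + A·q2·(Y − h2') + h0' ] = E[A·Y·q2]. -/

import Mathlib

/-!
Writing `g₀ = A q₀ - 1`, `g₁ = (1 - A) q₁ - A q₀`, `g₂ = A q₂ - (1 - A) q₁` for the three moment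
residuals, the augmented integrand telescopes to `A Y q₂ - (h₀' g₀ + h₁' g₁ + h₂' g₂)`. Each `hₖ'`
is a bounded function of the variables conditioned on in the `k`-th moment equation, so it can be
pulled out of that conditional expectation and `E[hₖ' gₖ] = E[hₖ' E[gₖ | ·]] = 0`.
-/

open MeasureTheory ProbabilityTheory
open scoped MeasureTheory ProbabilityTheory

section Orthogonality

variable {Ω β : Type*} [m0 : MeasurableSpace Ω] {μ : Measure Ω} {f g : Ω → ℝ}

theorem integral_mul_eq_zero_of_condExp_eq_zero {m : MeasurableSpace Ω} (hm : m ≤ m0)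
    [SigmaFinite (μ.trim hm)] (hf : StronglyMeasurable[m] f)
    (hg : Integrable g μ) (hfg : Integrable (f * g) μ) (hg0 : μ[g|m] =ᵐ[μ] 0) :
    ∫ ω, f ω * g ω ∂μ = 0 := by
  have hfg0 : μ[f * g|m] =ᵐ[μ] 0 := by
    filter_upwards [condExp_mul_of_stronglyMeasurable_left hf hfg hg, hg0] with ω hω hω0
    simp [hω, hω0]
  calc ∫ ω, f ω * g ω ∂μ = ∫ ω, (μ[f * g|m]) ω ∂μ := (integral_condExp hm).symm
    _ = 0 := by simp [integral_congr_ae hfg0]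

variable [MeasurableSpace β] {V : Ω → β} {φ : β → ℝ}

theorem integrable_comp_mul_of_bounded (hV : Measurable V) (hφ : Measurable φ)
    (hφC : ∃ C, ∀ b, |φ b| ≤ C) (hg : Integrable g μ) :
    Integrable (fun ω => φ (V ω) * g ω) μ := by
  obtain ⟨C, hC⟩ := hφC
  exact hg.bdd_mul (hφ.comp hV).aestronglyMeasurable (ae_of_all _ fun ω => hC (V ω))

theorem integral_comp_mul_eq_zero_of_condExp_comap_eq_zero [IsFiniteMeasure μ]
    (hV : Measurable V) (hφ : Measurable φ) (hφC : ∃ C, ∀ b, |φ b| ≤ C) (hg : Integrable g μ)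
    (hg0 : μ[g|MeasurableSpace.comap V inferInstance] =ᵐ[μ] 0) :
    ∫ ω, φ (V ω) * g ω ∂μ = 0 :=
  integral_mul_eq_zero_of_condExp_eq_zero hV.comap_le
    (hφ.comp (comap_measurable V)).stronglyMeasurable hg
    (integrable_comp_mul_of_bounded hV hφ hφC hg) hg0

end Orthogonality

theorem MeasureTheory.Integrable.mul_of_eq_zero_or_one {Ω : Type*} [MeasurableSpace Ω]
    {μ : Measure Ω} {a f : Ω → ℝ} (hf : Integrable f μ) (ha : AEStronglyMeasurable a μ)
    (ha01 : ∀ ω, a ω = 0 ∨ a ω = 1) : Integrable (fun ω => a ω * f ω) μ :=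
  hf.bdd_mul (c := 1) ha (ae_of_all _ fun ω => by rcases ha01 ω with h | h <;> simp [h])

theorem stmt7_general
    {Ω : Type*} [mΩ : MeasurableSpace Ω] (μ : Measure Ω) [IsProbabilityMeasure μ]
    (A Y Z W M D X : Ω → ℝ)
    (hA : Measurable A) (hW : Measurable W)
    (hM : Measurable M) (hD : Measurable D) (hX : Measurable X)
    (hA01 : ∀ ω, A ω = 0 ∨ A ω = 1)
    (q0 : ℝ × ℝ → ℝ)
    (hq0int : Integrable (fun ω => q0 (Z ω, X ω)) μ)
    (q1 : ℝ × ℝ × ℝ → ℝ)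
    (hq1int : Integrable (fun ω => q1 (Z ω, D ω, X ω)) μ)
    (q2 : ℝ × ℝ × ℝ × ℝ → ℝ)
    (hq2int : Integrable (fun ω => q2 (Z ω, M ω, D ω, X ω)) μ)
    (mWX mWDX mWMDX : MeasurableSpace Ω)
    (hmWX : mWX = MeasurableSpace.comap (fun ω => (W ω, X ω)) inferInstance)
    (hmWDX : mWDX = MeasurableSpace.comap (fun ω => (W ω, D ω, X ω)) inferInstance)
    (hmWMDX : mWMDX = MeasurableSpace.comap (fun ω => (W ω, M ω, D ω, X ω)) inferInstance)
    (hd : (μ[(fun ω => A ω * q0 (Z ω, X ω) - 1) | mWX]) =ᵐ[μ] 0)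
    (he : (μ[(fun ω => (1 - A ω) * q1 (Z ω, D ω, X ω) - A ω * q0 (Z ω, X ω)) | mWDX])
        =ᵐ[μ] 0)
    (hf : (μ[(fun ω => A ω * q2 (Z ω, M ω, D ω, X ω) - (1 - A ω) * q1 (Z ω, D ω, X ω)) | mWMDX])
        =ᵐ[μ] 0)
    (hAYq2 : Integrable (fun ω => A ω * Y ω * q2 (Z ω, M ω, D ω, X ω)) μ) :
    ∀ (h2' : ℝ × ℝ × ℝ × ℝ → ℝ) (h1' : ℝ × ℝ × ℝ → ℝ) (h0' : ℝ × ℝ → ℝ),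
      Measurable h2' → (∃ C, ∀ p, |h2' p| ≤ C) →
      Measurable h1' → (∃ C, ∀ p, |h1' p| ≤ C) →
      Measurable h0' → (∃ C, ∀ p, |h0' p| ≤ C) →
      Integrable (fun ω =>
        A ω * q0 (Z ω, X ω) * (h1' (W ω, D ω, X ω) - h0' (W ω, X ω))
          + (1 - A ω) * q1 (Z ω, D ω, X ω)
              * (h2' (W ω, M ω, D ω, X ω) - h1' (W ω, D ω, X ω))
          + A ω * q2 (Z ω, M ω, D ω, X ω) * (Y ω - h2' (W ω, M ω, D ω, X ω))
          + h0' (W ω, X ω)) μ →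
      ∫ ω, (A ω * q0 (Z ω, X ω) * (h1' (W ω, D ω, X ω) - h0' (W ω, X ω))
          + (1 - A ω) * q1 (Z ω, D ω, X ω)
              * (h2' (W ω, M ω, D ω, X ω) - h1' (W ω, D ω, X ω))
          + A ω * q2 (Z ω, M ω, D ω, X ω) * (Y ω - h2' (W ω, M ω, D ω, X ω))
          + h0' (W ω, X ω)) ∂μ
        = ∫ ω, A ω * Y ω * q2 (Z ω, M ω, D ω, X ω) ∂μ := by
  intro h2' h1' h0' hh2 hb2 hh1 hb1 hh0 hb0 _
  subst hmWX hmWDX hmWMDX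
  have hA01' : ∀ ω, 1 - A ω = 0 ∨ 1 - A ω = 1 := fun ω => by
    rcases hA01 ω with h | h <;> simp [h]
  have hAq0 := hq0int.mul_of_eq_zero_or_one hA.aestronglyMeasurable hA01
  have hAq1 := hq1int.mul_of_eq_zero_or_one (measurable_const.sub hA).aestronglyMeasurable hA01'
  have hAq2 := hq2int.mul_of_eq_zero_or_one hA.aestronglyMeasurable hA01
  set g0 : Ω → ℝ := fun ω => A ω * q0 (Z ω, X ω) - 1
  set g1 : Ω → ℝ := fun ω => (1 - A ω) * q1 (Z ω, D ω, X ω) - A ω * q0 (Z ω, X ω)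
  set g2 : Ω → ℝ := fun ω => A ω * q2 (Z ω, M ω, D ω, X ω) - (1 - A ω) * q1 (Z ω, D ω, X ω)
  have hg0 : Integrable g0 μ := hAq0.sub (integrable_const 1)
  have hg1 : Integrable g1 μ := hAq1.sub hAq0
  have hg2 : Integrable g2 μ := hAq2.sub hAq1
  have hV0 := hW.prodMk hX
  have hV1 := hW.prodMk (hD.prodMk hX)
  have hV2 := hW.prodMk (hM.prodMk (hD.prodMk hX))
  have hi0 := integrable_comp_mul_of_bounded hV0 hh0 hb0 hg0
  have hi1 := integrable_comp_mul_of_bounded hV1 hh1 hb1 hg1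
  have hi2 := integrable_comp_mul_of_bounded hV2 hh2 hb2 hg2
  calc _ = ∫ ω, A ω * Y ω * q2 (Z ω, M ω, D ω, X ω) - (h0' (W ω, X ω) * g0 ω
          + h1' (W ω, D ω, X ω) * g1 ω + h2' (W ω, M ω, D ω, X ω) * g2 ω) ∂μ :=
        integral_congr_ae (ae_of_all _ fun ω => by simp only [g0, g1, g2]; ring)
    _ = ∫ ω, A ω * Y ω * q2 (Z ω, M ω, D ω, X ω) ∂μ - (∫ ω, h0' (W ω, X ω) * g0 ω ∂μ
          + ∫ ω, h1' (W ω, D ω, X ω) * g1 ω ∂μ + ∫ ω, h2' (W ω, M ω, D ω, X ω) * g2 ω ∂μ) := by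
        rw [integral_sub hAYq2 ((hi0.fun_add hi1).fun_add hi2),
          integral_add (hi0.fun_add hi1) hi2, integral_add hi0 hi1]
    _ = ∫ ω, A ω * Y ω * q2 (Z ω, M ω, D ω, X ω) ∂μ := by
      rw [integral_comp_mul_eq_zero_of_condExp_comap_eq_zero hV0 hh0 hb0 hg0 hd,
        integral_comp_mul_eq_zero_of_condExp_comap_eq_zero hV1 hh1 hb1 hg1 he,
        integral_comp_mul_eq_zero_of_condExp_comap_eq_zero hV2 hh2 hb2 hg2 hf]
      norm_num

/-- if the treatment bridge functions `q0, q1, q2` satisfy their three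
conditional moment equations, then for ANY bounded measurable `h2', h1', h0'` the
augmented functional equals the proximal IPW formula `E[A·Y·q2]`. -/
theorem stmt7
    {Ω : Type*} [mΩ : MeasurableSpace Ω] (μ : Measure Ω) [IsProbabilityMeasure μ]
    (A Y Z W M D X : Ω → ℝ)
    (hA : Measurable A) (hY : Measurable Y) (hZ : Measurable Z) (hW : Measurable W)
    (hM : Measurable M) (hD : Measurable D) (hX : Measurable X)
    (hA01 : ∀ ω, A ω = 0 ∨ A ω = 1)
    (q0 : ℝ × ℝ → ℝ) (hq0 : Measurable q0)
    (hq0int : Integrable (fun ω => q0 (Z ω, X ω)) μ)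
    (q1 : ℝ × ℝ × ℝ → ℝ) (hq1 : Measurable q1)
    (hq1int : Integrable (fun ω => q1 (Z ω, D ω, X ω)) μ)
    (q2 : ℝ × ℝ × ℝ × ℝ → ℝ) (hq2 : Measurable q2)
    (hq2int : Integrable (fun ω => q2 (Z ω, M ω, D ω, X ω)) μ)
    (mWX mWDX mWMDX : MeasurableSpace Ω)
    (hmWX : mWX = MeasurableSpace.comap (fun ω => (W ω, X ω)) inferInstance)
    (hmWDX : mWDX = MeasurableSpace.comap (fun ω => (W ω, D ω, X ω)) inferInstance)
    (hmWMDX : mWMDX = MeasurableSpace.comap (fun ω => (W ω, M ω, D ω, X ω)) inferInstance)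
    (hd : (μ[(fun ω => A ω * q0 (Z ω, X ω) - 1) | mWX]) =ᵐ[μ] 0)
    (he : (μ[(fun ω => (1 - A ω) * q1 (Z ω, D ω, X ω) - A ω * q0 (Z ω, X ω)) | mWDX])
        =ᵐ[μ] 0)
    (hf : (μ[(fun ω => A ω * q2 (Z ω, M ω, D ω, X ω) - (1 - A ω) * q1 (Z ω, D ω, X ω)) | mWMDX])
        =ᵐ[μ] 0)
    (hAYq2 : Integrable (fun ω => A ω * Y ω * q2 (Z ω, M ω, D ω, X ω)) μ) :
    ∀ (h2' : ℝ × ℝ × ℝ × ℝ → ℝ) (h1' : ℝ × ℝ × ℝ → ℝ) (h0' : ℝ × ℝ → ℝ),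
      Measurable h2' → (∃ C, ∀ p, |h2' p| ≤ C) →
      Measurable h1' → (∃ C, ∀ p, |h1' p| ≤ C) →
      Measurable h0' → (∃ C, ∀ p, |h0' p| ≤ C) →
      Integrable (fun ω =>
        A ω * q0 (Z ω, X ω) * (h1' (W ω, D ω, X ω) - h0' (W ω, X ω))
          + (1 - A ω) * q1 (Z ω, D ω, X ω)
              * (h2' (W ω, M ω, D ω, X ω) - h1' (W ω, D ω, X ω))
          + A ω * q2 (Z ω, M ω, D ω, X ω) * (Y ω - h2' (W ω, M ω, D ω, X ω))
          + h0' (W ω, X ω)) μ →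
      ∫ ω, (A ω * q0 (Z ω, X ω) * (h1' (W ω, D ω, X ω) - h0' (W ω, X ω))
          + (1 - A ω) * q1 (Z ω, D ω, X ω)
              * (h2' (W ω, M ω, D ω, X ω) - h1' (W ω, D ω, X ω))
          + A ω * q2 (Z ω, M ω, D ω, X ω) * (Y ω - h2' (W ω, M ω, D ω, X ω))
          + h0' (W ω, X ω)) ∂μ
        = ∫ ω, A ω * Y ω * q2 (Z ω, M ω, D ω, X ω) ∂μ :=
  stmt7_general (mΩ := mΩ) μ A Y Z W M D X hA hW hM hD hX hA01 q0 hq0int q1 hq1int q2 hq2int mWX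
    mWDX mWMDX hmWX hmWDX hmWMDX hd he hf hAYq2
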